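/- If in addition the sequence (a_k) is bounded below and the series ∑_{k=0}^∞ η_k converges, then the series ∑_{k=1}^∞ Δ_{l(k)−1}² converges; in particular Δ_{l(k)−1}² → 0 (and hence Δ_{l(k)−1} → 0) as k → ∞. -/

import Mathlib

/-!
Set `W_k := max_{j ≤ min(k, M-1)} a_{k-j}`, so that the hypothesis reads
`a_{k+1} ≤ W_k + η_k - Δ_k²`. Inside one block of length `M` following the index `kM`, an
induction shows that no value of `a` (and hence no window maximum) exceeds `W_{kM}` by more
than the `η`'s spent so far; since `l(k+1) - 1` lies in that block, this gives
`a_{l(k+1)} + Δ_{l(k+1)-1}² ≤ a_{l(k)} + ∑_{t<M} η_{kM+t}`. Summing over `k` telescopes, and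
as `a` is bounded below and `∑ η` converges, the partial sums of `Δ_{l(k+1)-1}²` stay bounded.
-/

open Filter Finset

noncomputable def windowMax (a : ℕ → ℝ) (w k : ℕ) : ℝ :=
  (range (min k w + 1)).sup' nonempty_range_add_one (fun j => a (k - j))

lemma le_windowMax (a : ℕ → ℝ) {w k j : ℕ} (hj : j ≤ min k w) :
    a (k - j) ≤ windowMax a w k :=
  le_sup' (fun j => a (k - j)) (mem_range_succ_iff.mpr hj)

lemma windowMax_le {a : ℕ → ℝ} {w k : ℕ} {c : ℝ} (h : ∀ j ≤ min k w, a (k - j) ≤ c) :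
    windowMax a w k ≤ c :=
  sup'_le _ _ fun j hj => h j (mem_range_succ_iff.mp hj)

section NonmonotoneDescent

variable {w : ℕ} {a Δ η : ℕ → ℝ} (hη : ∀ k, 0 ≤ η k)
  (hdec : ∀ k, a (k + 1) ≤ windowMax a w k + η k - Δ k ^ 2)
include hη hdec

lemma windowMax_add_le {m : ℕ} (hm : w ≤ m) {i : ℕ} (hi : i ≤ w) :
    windowMax a w (m + i) ≤ windowMax a w m + ∑ t ∈ range i, η (m + t) := by
  induction i using Nat.strong_induction_on with
  | _ i ih =>
  refine windowMax_le fun j hj => ?_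
  rcases le_or_gt i j with hij | hji
  · have hold : a (m - (j - i)) ≤ windowMax a w m := le_windowMax a (by omega)
    have hsum_nonneg : 0 ≤ ∑ t ∈ range i, η (m + t) := sum_nonneg fun t _ => hη _
    rw [show m + i - j = m - (j - i) by omega]
    linarith
  · set i' := i - j - 1
    have hstep : a (m + i' + 1) ≤ windowMax a w (m + i') + η (m + i') :=
      (hdec _).trans (by linarith [sq_nonneg (Δ (m + i'))])
    have hprefix : ∑ t ∈ range (i' + 1), η (m + t) ≤ ∑ t ∈ range i, η (m + t) :=
      sum_le_sum_of_subset_of_nonneg (range_subset_range.mpr (by omega)) fun t _ _ => hη _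
    rw [show m + i - j = m + i' + 1 by omega]
    linarith [ih i' (by omega) (by omega), sum_range_succ (fun t => η (m + t)) i']

lemma apply_add_sq_le_windowMax {m n : ℕ} (hm : w ≤ m) (hmn : m < n) (hnm : n ≤ m + w + 1) :
    a n + Δ (n - 1) ^ 2 ≤ windowMax a w m + ∑ t ∈ range (w + 1), η (m + t) := by
  set i := n - 1 - m
  have hn : n = m + i + 1 := by omega
  have hwindow := windowMax_add_le hη hdec hm (i := i) (by omega)
  have hprefix : ∑ t ∈ range (i + 1), η (m + t) ≤ ∑ t ∈ range (w + 1), η (m + t) :=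
    sum_le_sum_of_subset_of_nonneg (range_subset_range.mpr (by omega)) fun t _ _ => hη _
  rw [hn, Nat.add_sub_cancel]
  linarith [hdec (m + i), sum_range_succ (fun t => η (m + t)) i]

end NonmonotoneDescent

lemma summable_of_add_le_add {u b e : ℕ → ℝ} (hb : ∀ k, 0 ≤ b k) (he : ∀ k, 0 ≤ e k)
    (hsum : Summable e) (hu : BddBelow (Set.range u)) (h : ∀ k, u (k + 1) + b k ≤ u k + e k) :
    Summable b := by
  obtain ⟨C, hC⟩ := hu
  have htelescope : ∀ N, ∑ k ∈ range N, b k ≤ u 0 - u N + ∑ k ∈ range N, e k := by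
    intro N
    induction N with
    | zero => simp
    | succ N ih => rw [sum_range_succ, sum_range_succ]; linarith [h N]
  refine summable_of_sum_range_le (c := u 0 - C + ∑' k, e k) hb fun N => ?_
  linarith [htelescope N, hC ⟨N, rfl⟩, hsum.sum_le_tsum (range N) fun k _ => he k]

lemma summable_sum_range_mul_add {η : ℕ → ℝ} (hsum : Summable η) {M : ℕ} (hM : 0 < M) :
    Summable fun k => ∑ t ∈ range M, η (k * M + t) :=
  summable_sum fun t _ => hsum.comp_injective fun k k' h => by
    simpa [hM.ne'] using (Nat.add_right_cancel h : k * M = k' * M)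

lemma tendsto_zero_of_sq_tendsto_zero {α : Type*} {l : Filter α} {f : α → ℝ}
    (h : Tendsto (fun x => f x ^ 2) l (nhds 0)) : Tendsto f l (nhds 0) := by
  rw [tendsto_zero_iff_abs_tendsto_zero]
  simpa [Function.comp_def, Real.sqrt_sq_eq_abs] using h.sqrt

/-- If (a_k) is bounded below and ∑ η_k converges, then ∑_{k≥1} Δ_{l(k)−1}² converges;
  in particular Δ_{l(k)−1}² → 0 and Δ_{l(k)−1} → 0. -/
theorem stmt_2 (M : ℕ) (hM : 1 ≤ M)
    (a Δ η : ℕ → ℝ)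
    (hη : ∀ k, 0 < η k)
    (hdec : ∀ k : ℕ,
      a (k + 1) ≤ (Finset.range (min k (M - 1) + 1)).sup'
          (Finset.nonempty_range_iff.mpr (Nat.succ_ne_zero _)) (fun j => a (k - j))
        + η k - (Δ k) ^ 2)
    (l : ℕ → ℕ)
    (hl_lb : ∀ k, 1 ≤ k → k * M - (M - 1) ≤ l k)
    (hl_ub : ∀ k, 1 ≤ k → l k ≤ k * M)
    (hl_max : ∀ k, 1 ≤ k →
      a (l k) = (Finset.range M).sup'
          (Finset.nonempty_range_iff.mpr (by omega)) (fun j => a (k * M - j)))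
    (hbdd : ∃ C : ℝ, ∀ k, C ≤ a k)
    (hsum : Summable η) :
    Summable (fun k : ℕ => (Δ (l (k + 1) - 1)) ^ 2)
      ∧ Tendsto (fun k : ℕ => (Δ (l (k + 1) - 1)) ^ 2) atTop (nhds 0)
      ∧ Tendsto (fun k : ℕ => Δ (l (k + 1) - 1)) atTop (nhds 0) := by
  have hη' : ∀ k, 0 ≤ η k := fun k => (hη k).le
  have hwidth : M - 1 + 1 = M := Nat.sub_add_cancel hM
  have hl_window : ∀ k, 1 ≤ k → a (l k) = windowMax a (M - 1) (k * M) := fun k hk => by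
    have hkM : M - 1 ≤ k * M := (Nat.sub_le M 1).trans (Nat.le_mul_of_pos_left M hk)
    exact (hl_max k hk).trans <| sup'_congr _ (by rw [min_eq_right hkM, hwidth]) fun _ _ => rfl
  have hblock : ∀ k, a (l (k + 1 + 1)) + Δ (l (k + 1 + 1) - 1) ^ 2
      ≤ a (l (k + 1)) + ∑ t ∈ range M, η ((k + 1) * M + t) := fun k => by
    have hlb := hl_lb (k + 1 + 1) (by omega)
    have hub := hl_ub (k + 1 + 1) (by omega)
    have hm : M ≤ (k + 1) * M := Nat.le_mul_of_pos_left M k.succ_pos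
    rw [show (k + 1 + 1) * M = (k + 1) * M + M by ring] at hlb hub
    have := apply_add_sq_le_windowMax hη' hdec (m := (k + 1) * M) (n := l (k + 1 + 1))
      (by omega) (by omega) (by omega)
    rwa [hwidth, ← hl_window (k + 1) (by omega)] at this
  obtain ⟨C, hC⟩ := hbdd
  have hblock_sums : Summable fun k => ∑ t ∈ range M, η ((k + 1) * M + t) :=
    (summable_nat_add_iff (f := fun k => ∑ t ∈ range M, η (k * M + t)) 1).mpr
      (summable_sum_range_mul_add hsum hM)
  have hsummable_shift : Summable fun k => Δ (l (k + 1 + 1) - 1) ^ 2 :=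
    summable_of_add_le_add (u := fun k => a (l (k + 1))) (fun _ => sq_nonneg _)
      (fun k => sum_nonneg fun t _ => hη' _) hblock_sums
      ⟨C, by rintro _ ⟨k, rfl⟩; exact hC _⟩ hblock
  have hsummable : Summable fun k => Δ (l (k + 1) - 1) ^ 2 :=
    (summable_nat_add_iff 1).mp hsummable_shift
  exact ⟨hsummable, hsummable.tendsto_atTop_zero,
    tendsto_zero_of_sq_tendsto_zero hsummable.tendsto_atTop_zero⟩
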